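/- For every integer ℓ ≥ 1 and every real t > 0, det( I_{j−k}(2t) + I_{j+k+1}(2t) )_{0≤j,k≤ℓ−1} = 2^{ℓ(ℓ−1)} / (π^{ℓ} ℓ!) · ∫_{[−1,1]^{ℓ}} Π_{1≤k<m≤ℓ} (x_k − x_m)² · Π_{j=1}^{ℓ} √((1 + x_j)/(1 − x_j)) · e^{2t x_j} dx_1⋯dx_ℓ. -/

import Mathlib

/-!
Writing `V_n = U_n - U_{n-1}` for the Chebyshev polynomials of the third kind, so that
`V_n(cos θ) cos(θ/2) = cos((n + 1/2)θ)`, one has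
`cos((j-k)θ) + cos((j+k+1)θ) = (1 + cos θ) V_j(cos θ) V_k(cos θ)`. Folding the Bessel integrals
onto `[0, π]` and substituting `x = cos θ` turns the matrix into `π⁻¹` times the Gram matrix of
`V_0, …, V_{ℓ-1}` for the weight `√((1+x)/(1-x)) e^{2tx}` on `[-1, 1]`. Andreief's identity
writes the Gram determinant as `1/ℓ!` times the integral of `det (V_j(x_i))²` against the
product weight, and `det (V_j(x_i))` is `2^{ℓ(ℓ-1)/2}` times the Vandermonde determinant because
`V_j` has degree `j` and leading coefficient `2^j`.
-/

open MeasureTheory Filter Real intervalIntegral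

/-- The modified Bessel-type coefficient `I_j(2t) = (1/2π)∫_{-π}^{π} e^{2t cos θ} cos(jθ) dθ`. -/
noncomputable def besselI (j : ℤ) (t : ℝ) : ℝ :=
  (1 / (2 * Real.pi)) * ∫ θ in (-Real.pi)..Real.pi, Real.exp (2 * t * Real.cos θ) * Real.cos (j * θ)

open Matrix Equiv in
theorem sum_sign_mul_sign_mul_prod_eq_det {ι R : Type*} [Fintype ι] [DecidableEq ι] [CommRing R]
    (G : Matrix ι ι R) (σ : Perm ι) :
    ∑ τ : Perm ι, ((Perm.sign σ * Perm.sign τ : ℤˣ) : R) * ∏ i, G (σ i) (τ i) = G.det := by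
  have h : ∑ τ : Perm ι, ((Perm.sign τ : ℤˣ) : R) * ∏ i, G (σ i) (τ i) = Perm.sign σ * G.det := by
    rw [← det_permute, ← det_transpose, det_apply']
    rfl
  simp_rw [Units.val_mul, Int.cast_mul, mul_assoc, ← Finset.mul_sum, h, ← mul_assoc,
    ← Int.cast_mul, ← Units.val_mul, Int.units_mul_self, Units.val_one, Int.cast_one, one_mul]

open Matrix Equiv in
/-- Andreief's identity. -/
theorem integral_det_mul_det {ι α 𝕜 : Type*} [Fintype ι] [DecidableEq ι] [RCLike 𝕜]
    [MeasurableSpace α] (μ : Measure α) [SigmaFinite μ] (f g : ι → α → 𝕜)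
    (hfg : ∀ i j, Integrable (fun x => f i x * g j x) μ) :
    ∫ x : ι → α, (of fun i j => f j (x i)).det * (of fun i j => g j (x i)).det
        ∂(Measure.pi fun _ => μ)
      = (Fintype.card ι).factorial * (of fun i j => ∫ y, f i y * g j y ∂μ).det := by
  have hexpand : ∀ x : ι → α, (of fun i j => f j (x i)).det * (of fun i j => g j (x i)).det
      = ∑ σ : Perm ι, ∑ τ : Perm ι, ((Perm.sign σ * Perm.sign τ : ℤˣ) : 𝕜) *
          ∏ i, f (σ i) (x i) * g (τ i) (x i) := by
    intro x
    rw [← det_transpose, ← det_transpose (of fun i j => g j (x i)), det_apply', det_apply',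
      Finset.sum_mul_sum]
    simp only [transpose_apply, of_apply, Finset.prod_mul_distrib, Units.val_mul, Int.cast_mul]
    exact Finset.sum_congr rfl fun σ _ => Finset.sum_congr rfl fun τ _ => by ring
  have hint (σ τ : Perm ι) : Integrable (fun x : ι → α => ∏ i, f (σ i) (x i) * g (τ i) (x i))
      (Measure.pi fun _ => μ) := Integrable.fintype_prod fun i => hfg (σ i) (τ i)
  calc ∫ x, (of fun i j => f j (x i)).det * (of fun i j => g j (x i)).det ∂(Measure.pi fun _ => μ)
      = ∑ σ : Perm ι, ∑ τ : Perm ι, ((Perm.sign σ * Perm.sign τ : ℤˣ) : 𝕜) *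
          ∏ i, ∫ y, f (σ i) y * g (τ i) y ∂μ := by
        simp_rw [hexpand]
        rw [integral_finsetSum _ fun σ _ => integrable_finsetSum _ fun τ _ => (hint σ τ).const_mul _]
        refine Finset.sum_congr rfl fun σ _ => ?_
        rw [integral_finsetSum _ fun τ _ => (hint σ τ).const_mul _]
        refine Finset.sum_congr rfl fun τ _ => ?_
        rw [MeasureTheory.integral_const_mul,
          integral_fintype_prod_eq_prod (fun i y => f (σ i) y * g (τ i) y)]
    _ = ∑ _σ : Perm ι, (of fun i j => ∫ y, f i y * g j y ∂μ).det :=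
        Finset.sum_congr rfl fun σ _ => by rw [← sum_sign_mul_sign_mul_prod_eq_det _ σ]; rfl
    _ = _ := by rw [Finset.sum_const, Finset.card_univ, Fintype.card_perm, nsmul_eq_mul]

theorem det_vandermonde_sq {R : Type*} [CommRing R] {n : ℕ} (x : Fin n → R) :
    (Matrix.vandermonde x).det ^ 2 = ∏ k : Fin n, ∏ m ∈ Finset.Ioi k, (x k - x m) ^ 2 := by
  simp only [Matrix.det_vandermonde, ← Finset.prod_pow]
  exact Finset.prod_congr rfl fun k _ => Finset.prod_congr rfl fun m _ => by ring

theorem sq_prod_pow_fin_val {M : Type*} [CommMonoid M] (a : M) (n : ℕ) :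
    (∏ i : Fin n, a ^ (i : ℕ)) ^ 2 = a ^ (n * (n - 1)) := by
  rw [← Finset.prod_pow, Finset.prod_congr rfl fun i _ => (pow_mul _ _ _).symm,
    Finset.prod_pow_eq_pow_sum, ← Finset.sum_mul, Fin.sum_univ_eq_sum_range (fun i => i),
    Finset.sum_range_id_mul_two]

theorem integral_neg_self_eq_two_mul_of_even {g : ℝ → ℝ} (hg : Continuous g)
    (heven : ∀ x, g (-x) = g x) (a : ℝ) :
    ∫ x in -a..a, g x = 2 * ∫ x in 0..a, g x := by
  have hreflect : ∫ x in -a..0, g x = ∫ x in 0..a, g x := by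
    simpa only [heven, neg_zero] using (integral_comp_neg (a := 0) (b := a) g).symm
  rw [← integral_add_adjacent_intervals (hg.intervalIntegrable _ 0) (hg.intervalIntegrable 0 _),
    hreflect, two_mul]

-- Both sides vanish off `(-1, 1)`, thanks to the junk values of `Real.sqrt` and `⁻¹`.
theorem one_add_mul_sqrt_inv_one_sub_sq (x : ℝ) :
    (1 + x) * √(1 - x ^ 2)⁻¹ = √((1 + x) / (1 - x)) := by
  by_cases hx : -1 < x ∧ x < 1
  · obtain ⟨hx₀, hx₁⟩ := hx
    have h₀ : 0 < √(1 + x) := sqrt_pos.2 (by linarith)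
    have h₁ : 0 < √(1 - x) := sqrt_pos.2 (by linarith)
    rw [show 1 - x ^ 2 = (1 + x) * (1 - x) by ring, sqrt_inv, sqrt_mul (by linarith),
      sqrt_div' _ (by linarith)]
    field_simp
    rw [sq_sqrt (by linarith)]
  · have hsq : 1 - x ^ 2 ≤ 0 := by
      rcases not_and_or.1 hx with h | h <;> nlinarith
    have hdiv : (1 + x) / (1 - x) ≤ 0 := by
      rcases not_and_or.1 hx with h | h
      · exact div_nonpos_of_nonpos_of_nonneg (by linarith) (by linarith)
      · exact div_nonpos_of_nonneg_of_nonpos (by linarith) (by linarith)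
    rw [sqrt_eq_zero_of_nonpos (inv_nonpos.2 hsq), sqrt_eq_zero_of_nonpos hdiv, mul_zero]

open Polynomial.Chebyshev in
theorem integral_mul_sqrt_one_add_div_one_sub (f : ℝ → ℝ) :
    ∫ x in -1..1, f x * √((1 + x) / (1 - x)) = ∫ θ in 0..π, f (cos θ) * (1 + cos θ) := by
  rw [← integral_measureT_eq_integral_cos (f := fun x => f x * (1 + x)), integral_measureT]
  simp_rw [mul_assoc, one_add_mul_sqrt_inv_one_sub_sq]

open Polynomial.Chebyshev in
theorem integrableOn_mul_sqrt_one_add_div_one_sub {f : ℝ → ℝ}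
    (hf : ContinuousOn f (Set.Icc (-1) 1)) :
    IntegrableOn (fun x => f x * √((1 + x) / (1 - x))) (Set.Icc (-1) 1) := by
  have hf' : ContinuousOn (fun x => f x * (1 + x)) (Set.uIcc (-1) 1) := by
    rw [Set.uIcc_of_le (by norm_num)]; fun_prop
  rw [← intervalIntegrable_iff_integrableOn_Icc_of_le (by norm_num)]
  simpa only [mul_assoc, one_add_mul_sqrt_inv_one_sub_sq] using
    intervalIntegrable_sqrt_one_sub_sq_inv.continuousOn_mul hf'

namespace Polynomial.Chebyshev

variable (R : Type*) [CommRing R]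

/-- The Chebyshev polynomials of the third kind. -/
noncomputable def V (n : ℤ) : R[X] := U R n - U R (n - 1)

theorem V_add_two (n : ℤ) : V R (n + 2) = 2 * X * V R (n + 1) - V R n := by
  simp only [V, U_add_two, show n + 2 - 1 = n + 1 by ring, U_eq R (n + 1),
    show n + 1 - 1 = n by ring, show n + 1 - 2 = n - 1 by ring]
  ring

theorem V_sub_one (n : ℤ) : V R (n - 1) = 2 * X * V R n - V R (n + 1) := by
  rw [show n + 1 = n - 1 + 2 by ring, V_add_two, show n - 1 + 1 = n by ring]
  ring

theorem V_zero : V R 0 = 1 := by simp [V]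

theorem V_one : V R 1 = 2 * X - 1 := by simp [V]

theorem V_real_cos (θ : ℝ) (n : ℤ) :
    (V ℝ n).eval (cos θ) * cos (θ / 2) = cos ((n + 1 / 2) * θ) := by
  induction n using Polynomial.Chebyshev.induct with
  | zero => simp only [V_zero, eval_one, one_mul, Int.cast_zero, zero_add, one_div_mul_eq_div]
  | one =>
    obtain ⟨φ, rfl⟩ : ∃ φ, θ = 2 * φ := ⟨θ / 2, by ring⟩
    rw [show 2 * φ / 2 = φ by ring, show ((1 : ℤ) + 1 / 2 : ℝ) * (2 * φ) = 3 * φ by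
      push_cast; ring]
    simp only [V_one, eval_sub, eval_mul, eval_X, eval_ofNat, eval_one, cos_two_mul,
      cos_three_mul]
    ring
  | add_two n ih1 ih2 =>
    simp only [V_add_two, eval_sub, eval_mul, eval_X, eval_ofNat, sub_mul,
      mul_assoc, ih1, ih2, sub_eq_iff_eq_add, cos_add_cos]
    push_cast
    ring_nf
  | neg_add_one n ih1 ih2 =>
    simp only [V_sub_one, eval_sub, eval_mul, eval_X, eval_ofNat, sub_mul,
      mul_assoc, ih1, ih2, sub_eq_iff_eq_add', cos_add_cos]
    push_cast
    ring_nf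

theorem cos_add_cos_eq_eval_V_mul_eval_V (j k : ℤ) (θ : ℝ) :
    cos (((j - k : ℤ) : ℝ) * θ) + cos (((j + k + 1 : ℤ) : ℝ) * θ)
      = (V ℝ j).eval (cos θ) * (V ℝ k).eval (cos θ) * (1 + cos θ) := by
  have hhalf : 1 + cos θ = 2 * cos (θ / 2) ^ 2 := by
    rw [cos_sq, show 2 * (θ / 2) = θ by ring]; ring
  rw [cos_add_cos, hhalf]
  calc 2 * cos ((((j - k : ℤ) : ℝ) * θ + ((j + k + 1 : ℤ) : ℝ) * θ) / 2)
        * cos ((((j - k : ℤ) : ℝ) * θ - ((j + k + 1 : ℤ) : ℝ) * θ) / 2)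
      = 2 * cos ((j + 1 / 2) * θ) * cos ((k + 1 / 2) * θ) := by
        rw [← cos_neg (((((j - k : ℤ) : ℝ) * θ - _) / 2))]
        push_cast; ring_nf
    _ = _ := by rw [← V_real_cos, ← V_real_cos]; ring

variable [IsDomain R] [NeZero (2 : R)]

theorem natDegree_V_natCast_le (n : ℕ) : (V R n).natDegree ≤ n := by
  refine (natDegree_sub_le _ _).trans (max_le (natDegree_U_natCast R n).le ?_)
  rw [natDegree_U]
  omega

theorem coeff_V_natCast_self (n : ℕ) : (V R n).coeff n = 2 ^ n := by
  have hU : (U R n).coeff n = 2 ^ n := by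
    simpa only [leadingCoeff, natDegree_U_natCast] using leadingCoeff_U_natCast R n
  rcases n with _ | n
  · simp [V]
  · rw [V, coeff_sub, hU, coeff_eq_zero_of_natDegree_lt, sub_zero]
    rw [natDegree_U]
    omega

open Matrix in
theorem det_eval_V {n : ℕ} (x : Fin n → R) :
    (of fun i j : Fin n => (V R j).eval (x i)).det
      = (∏ i : Fin n, (2 : R) ^ (i : ℕ)) * (vandermonde x).det := by
  have hdeg (j : Fin n) : (V R j).natDegree ≤ j := natDegree_V_natCast_le R j
  rw [eval_matrixOfPolynomials_eq_vandermonde_mul_matrixOfPolynomials x _ hdeg, det_mul,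
    det_of_isUpperTriangular (matrixOfPolynomials_blockTriangular _ hdeg), mul_comm]
  simp only [of_apply, coeff_V_natCast_self]

open Matrix in
theorem det_eval_V_mul_det_eval_V_mul {n : ℕ} (w : R → R) (x : Fin n → R) :
    (of fun i j : Fin n => (V R j).eval (x i)).det
        * (of fun i j : Fin n => (V R j).eval (x i) * w (x i)).det
      = 2 ^ (n * (n - 1)) * ((∏ k, ∏ m ∈ Finset.Ioi k, (x k - x m) ^ 2) * ∏ i, w (x i)) := by
  have hcol : (of fun i j : Fin n => (V R j).eval (x i) * w (x i))
      = of fun i j => w (x i) * of (fun i j : Fin n => (V R j).eval (x i)) i j := by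
    ext i j
    exact mul_comm _ _
  rw [hcol, det_mul_column, det_eval_V, ← det_vandermonde_sq, ← sq_prod_pow_fin_val]
  ring

end Polynomial.Chebyshev

open Polynomial.Chebyshev in
theorem besselI_sub_add_besselI_add_add_one (j k : ℤ) (t : ℝ) :
    besselI (j - k) t + besselI (j + k + 1) t
      = π⁻¹ * ∫ x in Set.Icc (-1) 1,
          (V ℝ j).eval x * ((V ℝ k).eval x * (√((1 + x) / (1 - x)) * exp (2 * t * x))) := by
  set F : ℝ → ℝ := fun x => (V ℝ j).eval x * (V ℝ k).eval x * exp (2 * t * x)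
  have hbessel (n : ℤ) : IntervalIntegrable (fun θ => exp (2 * t * cos θ) * cos (n * θ))
      volume (-π) π := by
    apply Continuous.intervalIntegrable; fun_prop
  calc besselI (j - k) t + besselI (j + k + 1) t
      = (2 * π)⁻¹ * ∫ θ in -π..π, F (cos θ) * (1 + cos θ) := by
        rw [besselI, besselI, one_div, ← mul_add, ← integral_add (hbessel _) (hbessel _)]
        congr 1
        refine integral_congr fun θ _ => ?_
        simp only [F, ← mul_add, cos_add_cos_eq_eval_V_mul_eval_V]
        ring
    _ = π⁻¹ * ∫ x in -1..1, F x * √((1 + x) / (1 - x)) := by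
        rw [integral_mul_sqrt_one_add_div_one_sub, integral_neg_self_eq_two_mul_of_even
          (by fun_prop) (fun θ => by rw [cos_neg])]
        field_simp
    _ = _ := by
        rw [integral_of_le (by norm_num), ← integral_Icc_eq_integral_Ioc]
        congr 1
        refine setIntegral_congr_fun measurableSet_Icc fun x _ => ?_
        simp only [F]
        ring

open Polynomial.Chebyshev in
theorem det_minus_plus_integral_general (ℓ : ℕ) (t : ℝ) :
    Matrix.det (Matrix.of fun j k : Fin ℓ =>
        besselI ((j : ℤ) - (k : ℤ)) t + besselI ((j : ℤ) + (k : ℤ) + 1) t)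
      = 2 ^ (ℓ * (ℓ - 1)) / (Real.pi ^ ℓ * (ℓ.factorial : ℝ)) *
        ∫ x : Fin ℓ → ℝ in Set.univ.pi fun _ => Set.Icc (-1 : ℝ) 1,
          (∏ k : Fin ℓ, ∏ m ∈ Finset.Ioi k, (x k - x m) ^ 2) *
            ∏ j : Fin ℓ, Real.sqrt ((1 + x j) / (1 - x j)) * Real.exp (2 * t * x j) := by
  set G := Matrix.of fun j k : Fin ℓ => ∫ y in Set.Icc (-1) 1,
    (V ℝ j).eval y * ((V ℝ k).eval y * (√((1 + y) / (1 - y)) * exp (2 * t * y)))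
  have hmatrix : (Matrix.of fun j k : Fin ℓ =>
      besselI ((j : ℤ) - (k : ℤ)) t + besselI ((j : ℤ) + (k : ℤ) + 1) t) = π⁻¹ • G := by
    ext j k
    exact besselI_sub_add_besselI_add_add_one j k t
  have hgram := integral_det_mul_det (volume.restrict (Set.Icc (-1 : ℝ) 1))
    (fun (j : Fin ℓ) y => (V ℝ j).eval y)
    (fun j y => (V ℝ j).eval y * (√((1 + y) / (1 - y)) * exp (2 * t * y))) fun i j =>
      (integrableOn_mul_sqrt_one_add_div_one_sub
        (f := fun y => (V ℝ i).eval y * (V ℝ j).eval y * exp (2 * t * y)) (by fun_prop)).congr_fun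
        (fun y _ => by ring) measurableSet_Icc
  simp_rw [det_eval_V_mul_det_eval_V_mul ℝ fun y => √((1 + y) / (1 - y)) * exp (2 * t * y),
    MeasureTheory.integral_const_mul,
    Fintype.card_fin] at hgram
  rw [hmatrix, Matrix.det_smul, Fintype.card_fin, volume_pi, Measure.restrict_pi_pi]
  calc π⁻¹ ^ ℓ * G.det = π⁻¹ ^ ℓ / ℓ.factorial * (ℓ.factorial * G.det) := by field_simp
    _ = _ := by rw [← hgram]; ring

/-- Identity (5.18)-(5.19): the determinant `det(I_{j-k}(2t) + I_{j+k+1}(2t))`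
equals a Jacobi-type multiple integral over `[-1,1]^ℓ`. -/
theorem det_minus_plus_integral (ℓ : ℕ) (hℓ : 1 ≤ ℓ) (t : ℝ) (ht : 0 < t) :
    Matrix.det (Matrix.of fun j k : Fin ℓ =>
        besselI ((j : ℤ) - (k : ℤ)) t + besselI ((j : ℤ) + (k : ℤ) + 1) t)
      = 2 ^ (ℓ * (ℓ - 1)) / (Real.pi ^ ℓ * (ℓ.factorial : ℝ)) *
        ∫ x : Fin ℓ → ℝ in Set.univ.pi fun _ => Set.Icc (-1 : ℝ) 1,
          (∏ k : Fin ℓ, ∏ m ∈ Finset.Ioi k, (x k - x m) ^ 2) *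
            ∏ j : Fin ℓ, Real.sqrt ((1 + x j) / (1 - x j)) * Real.exp (2 * t * x j) :=
  det_minus_plus_integral_general ℓ t
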